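/- arXiv:2204.01802 — 6 statements merged into one kernel-verified Lean document; each statement's English description precedes it below -/
import Mathlib

section
/- Let $\mathbb{F}_q$ be a finite field, $n \geq 1$, and let $\mathcal{F} = (f_1, \dots, f_n)$ be a generalized triangular dynamical system (GTDS). Then the map $\mathbb{F}_q^n \to \mathbb{F}_q^n$, $\mathbf{x} \mapsto (f_1(\mathbf{x}), \dots, f_n(\mathbf{x}))$, is a bijection. -/
/-- A generalized triangular dynamical system (GTDS) over a finite field induces
a bijection of `F^n`. -/
theorem gtds_bijective (F : Type*) [Field F] [Fintype F] (n : ℕ) (hn : 1 ≤ n)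
    (p : Fin n → F → F) (hp : ∀ i, Function.Bijective (p i))
    (g h : Fin n → (Fin n → F) → F)
    (hg : ∀ i x, g i x ≠ 0)
    (hgdep : ∀ i x y, (∀ j, i < j → x j = y j) → g i x = g i y)
    (hhdep : ∀ i x y, (∀ j, i < j → x j = y j) → h i x = h i y)
    (𝓕 : (Fin n → F) → Fin n → F)
    (h𝓕 : ∀ x i, 𝓕 x i = if (i : ℕ) + 1 = n then p i (x i)
        else p i (x i) * g i x + h i x) :
    Function.Bijective 𝓕 := by
  have hinj : Function.Injective 𝓕 := by
    intro x y hxy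
    have key : ∀ k, ∀ i : Fin n, n - (i : ℕ) ≤ k → x i = y i := by
      intro k
      induction k with
      | zero => intro i hi; exact absurd hi (by have := i.isLt; omega)
      | succ k ih =>
        intro i hi
        have htail : ∀ j : Fin n, i < j → x j = y j := by
          intro j hj
          exact ih j (by have := Fin.lt_def.mp hj; omega)
        have h1 := congrFun hxy i
        rw [h𝓕, h𝓕] at h1
        by_cases hc : (i : ℕ) + 1 = n
        · simp only [hc, if_pos rfl] at h1
          exact (hp i).1 h1
        · simp only [if_neg hc] at h1
          rw [hgdep i x y htail, hhdep i x y htail] at h1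
          have h2 : p i (x i) * g i y = p i (y i) * g i y := by
            exact add_right_cancel h1
          exact (hp i).1 (mul_right_cancel₀ (hg i y) h2)
    funext i
    exact key n i (by omega)
  exact Finite.injective_iff_bijective.mp hinj
end

section
/- Let $\mathbb{F}_q$ be a finite field and let $\mathcal{F}$ be a GTDS with univariate permutations $p_i$, functions $g_i$ nowhere zero, and functions $h_i$. Define $\tilde{f}_n(\mathbf{x}) = p_n^{-1}(x_n)$ and recursively $\tilde{f}_i(\mathbf{x}) = p_i^{-1}\big((x_i - h_i(\tilde{f}_{i+1}(\mathbf{x}),\dots,\tilde{f}_n(\mathbf{x}))) \cdot g_i(\tilde{f}_{i+1}(\mathbf{x}),\dots,\tilde{f}_n(\mathbf{x}))^{q-2}\big)$ for $i = n-1, \dots, 1$. Then $\tilde{\mathcal{F}} = (\tilde{f}_1,\dots,\tilde{f}_n)$ is the inverse of $\mathcal{F}$, i.e., $\tilde{\mathcal{F}} \circ \mathcal{F} = \mathrm{id}$ on $\mathbb{F}_q^n$. -/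
/-- The explicit inverse of a GTDS: `𝓕inv ∘ 𝓕 = id`. -/
theorem gtds_inverse (F : Type*) [Field F] [Fintype F] (n : ℕ) (hn : 1 ≤ n)
    (p : Fin n → F → F) (hp : ∀ i, Function.Bijective (p i))
    (pinv : Fin n → F → F)
    (hpinv : ∀ i, Function.LeftInverse (pinv i) (p i) ∧
      Function.RightInverse (pinv i) (p i))
    (g h : Fin n → (Fin n → F) → F)
    (hg : ∀ i x, g i x ≠ 0)
    (hgdep : ∀ i x y, (∀ j, i < j → x j = y j) → g i x = g i y)
    (hhdep : ∀ i x y, (∀ j, i < j → x j = y j) → h i x = h i y)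
    (𝓕 : (Fin n → F) → Fin n → F)
    (h𝓕 : ∀ x i, 𝓕 x i = if (i : ℕ) + 1 = n then p i (x i)
        else p i (x i) * g i x + h i x)
    (𝓕inv : (Fin n → F) → Fin n → F)
    (h𝓕inv : ∀ x i, 𝓕inv x i = if (i : ℕ) + 1 = n then pinv i (x i)
        else pinv i ((x i - h i (𝓕inv x)) * (g i (𝓕inv x)) ^ (Fintype.card F - 2))) :
    𝓕inv ∘ 𝓕 = id := by
  funext x i
  simp only [Function.comp_apply, id_eq]
  have key : ∀ m : ℕ, ∀ i : Fin n, n - (i : ℕ) ≤ m → 𝓕inv (𝓕 x) i = x i := by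
    intro m
    induction m with
    | zero =>
      intro i hi
      exact absurd hi (by have := i.isLt; omega)
    | succ m ih =>
      intro i hi
      by_cases hlast : (i : ℕ) + 1 = n
      · rw [h𝓕inv, if_pos hlast, h𝓕, if_pos hlast, (hpinv i).1]
      · have hgt : ∀ j : Fin n, i < j → 𝓕inv (𝓕 x) j = x j := by
          intro j hj
          have hj' : (i : ℕ) < (j : ℕ) := hj
          exact ih j (by omega)
        have hgeq : g i (𝓕inv (𝓕 x)) = g i x := hgdep i _ _ hgt
        have hheq : h i (𝓕inv (𝓕 x)) = h i x := hhdep i _ _ hgt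
        rw [h𝓕inv, hgeq, hheq, if_neg hlast, h𝓕, if_neg hlast]
        have hq : 2 ≤ Fintype.card F := Fintype.one_lt_card
        have hgx := hg i x
        have hpow : g i x * (g i x) ^ (Fintype.card F - 2) = 1 := by
          rw [← pow_succ']
          have : Fintype.card F - 2 + 1 = Fintype.card F - 1 := by omega
          rw [this, FiniteField.pow_card_sub_one_eq_one _ hgx]
        have : (p i (x i) * g i x + h i x - h i x) * (g i x) ^ (Fintype.card F - 2)
            = p i (x i) := by
          rw [add_sub_cancel_right, mul_assoc, hpow, mul_one]
        rw [this, (hpinv i).1]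
  exact key n i (by have := i.isLt; omega)
end

section
/- Let $\mathbb{F}_q$ be a finite field, $n \geq 2$, and $\omega_1, \dots, \omega_n \in \mathbb{F}_q$ with $\sum_{i=1}^n \omega_i = 0$. Let $m$ be the largest index with $\omega_m \neq 0$ (assume it exists). Let $p_1, \dots, p_n : \mathbb{F}_q \to \mathbb{F}_q$ be bijections, and $g : \mathbb{F}_q \times \mathbb{F}_q^{n-m} \to \mathbb{F}_q$ any function. Then the generalized Lai--Massey map given by $f_i(\mathbf{x}) = p_i(x_i) + g(\sum_{j=1}^m \omega_j p_j(x_j), x_{m+1}, \dots, x_n)$ for $1 \leq i \leq m$ and $f_i(\mathbf{x}) = p_i(x_i)$ for $m < i \leq n$ is a bijection of $\mathbb{F}_q^n$. -/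
/-- The generalized Lai--Massey map is a bijection of `F^n`. -/
theorem generalized_lai_massey_bijective (F : Type*) [Field F] [Fintype F]
    (n : ℕ) (hn : 2 ≤ n)
    (ω : Fin n → F) (hω : ∑ i, ω i = 0)
    (m : Fin n) (hm : ω m ≠ 0) (hmax : ∀ j, m < j → ω j = 0)
    (p : Fin n → F → F) (hp : ∀ i, Function.Bijective (p i))
    (g : F → (Fin n → F) → F)
    (hgdep : ∀ s x y, (∀ j, m < j → x j = y j) → g s x = g s y)
    (𝓕 : (Fin n → F) → Fin n → F)
    (h𝓕 : ∀ x i, 𝓕 x i =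
      if i ≤ m then
        p i (x i) + g (∑ j ∈ Finset.univ.filter (· ≤ m), ω j * p j (x j)) x
      else p i (x i)) :
    Function.Bijective 𝓕 := by
  have hωsum : ∑ j ∈ Finset.univ.filter (· ≤ m), ω j = 0 := by
    have h := Finset.sum_filter_add_sum_filter_not Finset.univ (· ≤ m) ω
    have h2 : ∑ j ∈ Finset.univ.filter (fun j => ¬ j ≤ m), ω j = 0 := by
      apply Finset.sum_eq_zero
      intro j hj
      simp only [Finset.mem_filter, not_le] at hj
      exact hmax j hj.2
    rw [h2, add_zero] at h
    rw [h, hω]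
  -- invariance of the weighted sum
  have key : ∀ x, ∑ j ∈ Finset.univ.filter (· ≤ m), ω j * (𝓕 x j) =
      ∑ j ∈ Finset.univ.filter (· ≤ m), ω j * p j (x j) := by
    intro x
    have : ∀ j ∈ Finset.univ.filter (· ≤ m), ω j * 𝓕 x j =
        ω j * p j (x j) + ω j * g (∑ j ∈ Finset.univ.filter (· ≤ m), ω j * p j (x j)) x := by
      intro j hj
      simp only [Finset.mem_filter] at hj
      rw [h𝓕, if_pos hj.2, mul_add]
    rw [Finset.sum_congr rfl this, Finset.sum_add_distrib, ← Finset.sum_mul, hωsum, zero_mul,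
      add_zero]
  have hinj : Function.Injective 𝓕 := by
    intro x y hxy
    -- agreement above m
    have htail : ∀ j, m < j → x j = y j := by
      intro j hj
      have h1 : 𝓕 x j = 𝓕 y j := by rw [hxy]
      rw [h𝓕, h𝓕, if_neg (not_le.mpr hj), if_neg (not_le.mpr hj)] at h1
      exact (hp j).injective h1
    have hS : ∑ j ∈ Finset.univ.filter (· ≤ m), ω j * p j (x j) =
        ∑ j ∈ Finset.univ.filter (· ≤ m), ω j * p j (y j) := by
      rw [← key x, ← key y, hxy]
    funext i
    by_cases hi : i ≤ m
    · have h1 : 𝓕 x i = 𝓕 y i := by rw [hxy]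
      rw [h𝓕, h𝓕, if_pos hi, if_pos hi, hS, hgdep _ x y htail] at h1
      exact (hp i).injective (add_right_cancel h1)
    · exact htail i (not_le.mp hi)
  exact Finite.injective_iff_bijective.mp hinj
end

section
/- Let $\mathbb{F}_q$ be a finite field, $n \geq 1$, and let $g_i, h_i : \mathbb{F}_q^{n-i} \to \mathbb{F}_q$ for $1 \leq i \leq n-1$ with each $g_i$ nowhere zero. Then the Horst map $(x_1, \dots, x_n) \mapsto (x_1 \cdot g_1(x_2,\dots,x_n) + h_1(x_2,\dots,x_n), \dots, x_{n-1} \cdot g_{n-1}(x_n) + h_{n-1}(x_n), x_n)$ is a bijection of $\mathbb{F}_q^n$. -/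
/-- The Horst map is a bijection of `F^n`. -/
theorem horst_bijective (F : Type*) [Field F] [Fintype F] (n : ℕ) (hn : 1 ≤ n)
    (g h : Fin n → (Fin n → F) → F)
    (hg : ∀ i x, g i x ≠ 0)
    (hgdep : ∀ i x y, (∀ j, i < j → x j = y j) → g i x = g i y)
    (hhdep : ∀ i x y, (∀ j, i < j → x j = y j) → h i x = h i y)
    (𝓕 : (Fin n → F) → Fin n → F)
    (h𝓕 : ∀ x i, 𝓕 x i = if (i : ℕ) + 1 = n then x i
        else x i * g i x + h i x) :
    Function.Bijective 𝓕 := by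
  rw [← Finite.injective_iff_bijective]
  intro x y hxy
  have key : ∀ k : ℕ, ∀ j : Fin n, n - (j : ℕ) ≤ k → x j = y j := by
    intro k
    induction k with
    | zero => intro j hj; exact absurd hj (by have := j.isLt; omega)
    | succ k ih =>
      intro j hj
      have hfj : 𝓕 x j = 𝓕 y j := congrFun hxy j
      rw [h𝓕 x j, h𝓕 y j] at hfj
      by_cases hc : (j : ℕ) + 1 = n
      · rwa [if_pos hc, if_pos hc] at hfj
      · have hgt : ∀ j', j < j' → x j' = y j' := by
          intro j' hj'
          have hj'v : (j : ℕ) < (j' : ℕ) := hj'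
          exact ih j' (by omega)
        rw [if_neg hc, if_neg hc, hgdep j x y hgt, hhdep j x y hgt] at hfj
        exact mul_right_cancel₀ (hg j y) (add_right_cancel hfj)
  funext j
  exact key n j (by omega)
end

section
/- Let $\mathbb{F}_q$ be a finite field, $n \geq 1$, and $\mathcal{F} : \mathbb{F}_q^n \to \mathbb{F}_q^n$ a GTDS whose univariate permutation polynomials $p_1, \dots, p_n$ (of degree $< q$) each satisfy $1 < \deg p_i \leq d$ and $\delta(p_i) < q$. Then for all $\Delta\mathbf{x}, \Delta\mathbf{y} \in \mathbb{F}_q^n$ with $\Delta\mathbf{x} \neq \mathbf{0}$, the differential count satisfies $\delta_{\mathcal{F}}(\Delta\mathbf{x}, \Delta\mathbf{y}) = |\{\mathbf{x} \in \mathbb{F}_q^n : \mathcal{F}(\mathbf{x} + \Delta\mathbf{x}) - \mathcal{F}(\mathbf{x}) = \Delta\mathbf{y}\}| \leq q^{n - \mathrm{wt}(\Delta\mathbf{x})} \cdot d^{\mathrm{wt}(\Delta\mathbf{x})}$, where $\mathrm{wt}$ denotes the Hamming weight (number of nonzero entries). -/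
open Polynomial
open scoped Classical

/-- At most `deg p` solutions `v` of `α·p(v+a) - β·p(v) = b` when `a ≠ 0`,
`α,β ≠ 0`, provided `p` has differential uniformity `< q`. -/
lemma key_count {F : Type*} [Field F] [Fintype F] (p : Polynomial F)
    (hd1 : 1 < p.natDegree)
    (hdu : ∀ a : F, a ≠ 0 → ∀ b : F,
      Nat.card {x : F | p.eval (x + a) - p.eval x = b} < Fintype.card F)
    (α β a b : F) (hα : α ≠ 0) (hβ : β ≠ 0) (ha : a ≠ 0) :
    (Finset.univ.filter fun v : F => α * p.eval (v + a) - β * p.eval v = b).card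
      ≤ p.natDegree := by
  set Q : Polynomial F :=
    C α * (p.comp (X + C a)) - C β * p - C b with hQdef
  have heval : ∀ v : F, Q.eval v = α * p.eval (v + a) - β * p.eval v - b := by
    intro v; simp [hQdef, eval_comp]
  have hp0 : p ≠ 0 := fun h => by simp [h] at hd1
  have hm : (p.comp (X + C a)).natDegree = p.natDegree := by
    rw [natDegree_comp, natDegree_X_add_C, mul_one]
  have hQ0 : Q ≠ 0 := by
    by_cases hab : α = β
    · intro hQ
      have hall : ∀ v : F, p.eval (v + a) - p.eval v = b * α⁻¹ := by
        intro v
        have h1 : Q.eval v = 0 := by rw [hQ]; simp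
        rw [heval v, ← hab] at h1
        field_simp
        linear_combination h1
      have hset : {x : F | p.eval (x + a) - p.eval x = b * α⁻¹} = Set.univ :=
        Set.eq_univ_of_forall hall
      have hlt := hdu a ha (b * α⁻¹)
      rw [hset, Nat.card_coe_set_eq, Set.ncard_univ, Nat.card_eq_fintype_card] at hlt
      exact lt_irrefl _ hlt
    · intro hQ
      have h1 : (p.comp (X + C a)).coeff p.natDegree = p.leadingCoeff := by
        conv_lhs => rw [← hm]
        rw [coeff_natDegree, leadingCoeff_comp (by rw [natDegree_X_add_C]; norm_num),
          (monic_X_add_C a).leadingCoeff, one_pow, mul_one]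
      have hne : p.natDegree ≠ 0 := by omega
      have hc : Q.coeff p.natDegree = (α - β) * p.leadingCoeff := by
        simp [hQdef, coeff_sub, coeff_C_mul, coeff_C, hne, h1, coeff_natDegree]
        ring
      rw [hQ, coeff_zero] at hc
      rcases mul_eq_zero.mp hc.symm with hc1 | hc1
      · exact hab (sub_eq_zero.mp hc1)
      · exact hp0 (leadingCoeff_eq_zero.mp hc1)
  have hdegQ : Q.natDegree ≤ p.natDegree := by
    refine le_trans (natDegree_sub_le _ _) (max_le (le_trans (natDegree_sub_le _ _)
      (max_le ?_ ?_)) ?_)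
    · exact le_trans (natDegree_C_mul_le _ _) (le_of_eq hm)
    · exact natDegree_C_mul_le _ _
    · simp
  calc (Finset.univ.filter fun v : F => α * p.eval (v + a) - β * p.eval v = b).card
      ≤ Q.roots.toFinset.card := by
        apply Finset.card_le_card
        intro v hv
        rw [Finset.mem_filter] at hv
        rw [Multiset.mem_toFinset, mem_roots hQ0]
        rw [IsRoot, heval v, hv.2, sub_self]
    _ ≤ Multiset.card Q.roots := Multiset.toFinset_card_le _
    _ ≤ Q.natDegree := card_roots' Q
    _ ≤ p.natDegree := hdegQ

/-- Tree-counting lemma: a triangular system where condition `i` depends only on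
coordinates `≥ i` and each has fiberwise at most `c i` solutions. -/
lemma tree_count {F : Type*} [Fintype F] [Nonempty F] :
    ∀ (n : ℕ) (P : Fin n → (Fin n → F) → Prop) (c : Fin n → ℕ),
    (∀ (i : Fin n) (x y : Fin n → F), (∀ j, i ≤ j → x j = y j) → P i x → P i y) →
    (∀ (i : Fin n) (x : Fin n → F),
      (Finset.univ.filter fun v : F => P i (Function.update x i v)).card ≤ c i) →
    (Finset.univ.filter fun x : Fin n → F => ∀ i, P i x).card ≤ ∏ i, c i := by
  intro n
  induction n with
  | zero =>
    intro P c _ _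
    calc (Finset.univ.filter fun x : Fin 0 → F => ∀ i, P i x).card
        ≤ (Finset.univ : Finset (Fin 0 → F)).card := Finset.card_filter_le _ _
      _ = 1 := by simp
      _ = ∏ i : Fin 0, c i := by simp
  | succ n ih =>
    intro P c hdep hfib
    obtain ⟨a⟩ := ‹Nonempty F›
    set s := Finset.univ.filter fun x : Fin (n+1) → F => ∀ i, P i x with hs
    have hfiber : ∀ t ∈ s.image Fin.tail,
        (s.filter fun x => Fin.tail x = t).card ≤ c 0 := by
      intro t _
      have hinj : Set.InjOn (fun x : Fin (n+1) → F => x 0)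
          ↑(s.filter fun x => Fin.tail x = t) := by
        intro x hx y hy hxy
        simp only [Finset.coe_filter, Set.mem_setOf_eq] at hx hy
        have hxy' : x 0 = y 0 := hxy
        have : Fin.cons (x 0) (Fin.tail x) = Fin.cons (y 0) (Fin.tail y) := by
          rw [hx.2, hy.2, hxy']
        rwa [Fin.cons_self_tail, Fin.cons_self_tail] at this
      calc (s.filter fun x => Fin.tail x = t).card
          = ((s.filter fun x => Fin.tail x = t).image fun x => x 0).card :=
            (Finset.card_image_of_injOn hinj).symm
        _ ≤ (Finset.univ.filter fun v : F =>
              P 0 (Function.update (Fin.cons a t) 0 v)).card := by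
            apply Finset.card_le_card
            intro v hv
            rw [Finset.mem_image] at hv
            obtain ⟨x, hx, rfl⟩ := hv
            rw [Finset.mem_filter] at hx ⊢
            refine ⟨Finset.mem_univ _, ?_⟩
            rw [Fin.update_cons_zero, ← hx.2, Fin.cons_self_tail]
            exact (Finset.mem_filter.mp hx.1).2 0
        _ ≤ c 0 := hfib 0 _
    have himg : s.image Fin.tail ⊆
        Finset.univ.filter fun t : Fin n → F => ∀ i : Fin n, P i.succ (Fin.cons a t) := by
      intro t ht
      rw [Finset.mem_image] at ht
      obtain ⟨x, hx, rfl⟩ := ht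
      rw [Finset.mem_filter]
      refine ⟨Finset.mem_univ _, fun i => ?_⟩
      refine hdep i.succ x _ ?_ ((Finset.mem_filter.mp hx).2 i.succ)
      intro j hj
      by_cases hj0 : j = 0
      · exfalso
        rw [hj0, Fin.le_zero_iff] at hj
        exact Fin.succ_ne_zero i hj
      · obtain ⟨k, rfl⟩ := Fin.eq_succ_of_ne_zero hj0
        simp [Fin.cons_succ, Fin.tail]
    have hih : (Finset.univ.filter fun t : Fin n → F =>
        ∀ i : Fin n, P i.succ (Fin.cons a t)).card ≤ ∏ i : Fin n, c i.succ := by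
      apply ih (fun i t => P i.succ (Fin.cons a t)) (fun i => c i.succ)
      · intro i x y hxy hP
        refine hdep i.succ _ _ ?_ hP
        intro j hj
        by_cases hj0 : j = 0
        · subst hj0; simp
        · obtain ⟨k, rfl⟩ := Fin.eq_succ_of_ne_zero hj0
          simp only [Fin.cons_succ]
          exact hxy k (by rwa [Fin.succ_le_succ_iff] at hj)
      · intro i t
        have hkey : ∀ v : F, (Fin.cons a (Function.update t i v) : Fin (n+1) → F)
            = Function.update (Fin.cons a t : Fin (n+1) → F) i.succ v := by
          intro v
          exact Fin.cons_update (α := fun _ : Fin (n+1) => F) (x := a) (p := t) (i := i) (y := v)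
        have hfe : (Finset.univ.filter fun v : F =>
              P i.succ (Fin.cons a (Function.update t i v)))
            = (Finset.univ.filter fun v : F =>
              P i.succ (Function.update (Fin.cons a t) i.succ v)) :=
          Finset.filter_congr (fun v _ => by rw [hkey v])
        rw [hfe]
        exact hfib i.succ _
    calc s.card ≤ c 0 * (s.image Fin.tail).card :=
          Finset.card_le_mul_card_image s (c 0) hfiber
      _ ≤ c 0 * ∏ i : Fin n, c i.succ :=
          Nat.mul_le_mul_left _ (le_trans (Finset.card_le_card himg) hih)
      _ = ∏ i, c i := (Fin.prod_univ_succ c).symm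

/-- Differential count bound for a GTDS. -/
theorem gtds_differential_bound (F : Type*) [Field F] [Fintype F]
    (n : ℕ) (hn : 1 ≤ n) (d : ℕ)
    (p : Fin n → Polynomial F)
    (hp : ∀ i, Function.Bijective (fun x => (p i).eval x))
    (hdegq : ∀ i, (p i).natDegree < Fintype.card F)
    (hdeg : ∀ i, 1 < (p i).natDegree ∧ (p i).natDegree ≤ d)
    (hdu : ∀ i, ∀ a : F, a ≠ 0 → ∀ b : F,
      Nat.card {x : F | (p i).eval (x + a) - (p i).eval x = b} < Fintype.card F)
    (g h : Fin n → (Fin n → F) → F)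
    (hg : ∀ i x, g i x ≠ 0)
    (hgdep : ∀ i x y, (∀ j, i < j → x j = y j) → g i x = g i y)
    (hhdep : ∀ i x y, (∀ j, i < j → x j = y j) → h i x = h i y)
    (𝓕 : (Fin n → F) → Fin n → F)
    (h𝓕 : ∀ x i, 𝓕 x i = if (i : ℕ) + 1 = n then (p i).eval (x i)
        else (p i).eval (x i) * g i x + h i x)
    (Δx Δy : Fin n → F) (hΔx : Δx ≠ 0) :
    Nat.card {x : Fin n → F | ∀ i, 𝓕 (fun j => x j + Δx j) i - 𝓕 x i = Δy i} ≤
      Fintype.card F ^ (n - (Finset.univ.filter fun i => Δx i ≠ 0).card) *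
        d ^ (Finset.univ.filter fun i => Δx i ≠ 0).card := by
  have hFdep : ∀ (i : Fin n) (x y : Fin n → F), (∀ j, i ≤ j → x j = y j) →
      𝓕 x i = 𝓕 y i := by
    intro i x y hxy
    rw [h𝓕, h𝓕]
    have hxi : x i = y i := hxy i le_rfl
    have hgi : g i x = g i y := hgdep i x y (fun j hj => hxy j hj.le)
    have hhi : h i x = h i y := hhdep i x y (fun j hj => hxy j hj.le)
    split <;> rw [hxi] <;> try rw [hgi, hhi]
  set P : Fin n → (Fin n → F) → Prop :=
    fun i x => 𝓕 (fun j => x j + Δx j) i - 𝓕 x i = Δy i with hPdef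
  set c : Fin n → ℕ := fun i => if Δx i ≠ 0 then d else Fintype.card F with hcdef
  have hcard : Nat.card {x : Fin n → F | ∀ i, P i x}
      = (Finset.univ.filter fun x : Fin n → F => ∀ i, P i x).card := by
    rw [Nat.card_eq_fintype_card]
    simp [Fintype.card_subtype]
  have hmain : (Finset.univ.filter fun x : Fin n → F => ∀ i, P i x).card ≤ ∏ i, c i := by
    apply tree_count n P c
    · intro i x y hxy hP
      have h1 : 𝓕 x i = 𝓕 y i := hFdep i x y hxy
      have h2 : 𝓕 (fun j => x j + Δx j) i = 𝓕 (fun j => y j + Δx j) i :=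
        hFdep i _ _ (fun j hj => by rw [hxy j hj])
      simp only [hPdef] at hP ⊢
      rw [← h1, ← h2]
      exact hP
    · intro i x
      by_cases hΔxi : Δx i = 0
      · calc (Finset.univ.filter fun v : F => P i (Function.update x i v)).card
            ≤ (Finset.univ : Finset F).card := Finset.card_filter_le _ _
          _ = Fintype.card F := Finset.card_univ
          _ ≤ c i := by simp [hcdef, hΔxi]
      · have hci : c i = d := by simp [hcdef, hΔxi]
        rw [hci]
        by_cases hin : (i : ℕ) + 1 = n
        · have hcond : ∀ v : F, P i (Function.update x i v) ↔
              (1:F) * (p i).eval (v + Δx i) - 1 * (p i).eval v = Δy i := by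
            intro v
            simp only [hPdef, h𝓕, hin, if_pos, Function.update_self, one_mul]
          have hfe : (Finset.univ.filter fun v : F => P i (Function.update x i v))
              = (Finset.univ.filter fun v : F =>
                  (1:F) * (p i).eval (v + Δx i) - 1 * (p i).eval v = Δy i) :=
            Finset.filter_congr (fun v _ => hcond v)
          rw [hfe]
          exact le_trans (key_count (p i) (hdeg i).1 (hdu i) 1 1 (Δx i) (Δy i)
            one_ne_zero one_ne_zero hΔxi) (hdeg i).2
        · set A : F := g i (fun j => x j + Δx j) with hA
          set B : F := g i x with hB
          set HA : F := h i (fun j => x j + Δx j) with hHA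
          set HB : F := h i x with hHB
          have hgA : ∀ v : F, g i (fun j => Function.update x i v j + Δx j) = A := by
            intro v
            apply hgdep
            intro j hj
            simp [Function.update_of_ne hj.ne']
          have hgB : ∀ v : F, g i (Function.update x i v) = B := by
            intro v
            apply hgdep
            intro j hj
            simp [Function.update_of_ne hj.ne']
          have hhA : ∀ v : F, h i (fun j => Function.update x i v j + Δx j) = HA := by
            intro v
            apply hhdep
            intro j hj
            simp [Function.update_of_ne hj.ne']
          have hhB : ∀ v : F, h i (Function.update x i v) = HB := by
            intro v
            apply hhdep
            intro j hj
            simp [Function.update_of_ne hj.ne']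
          have hcond : ∀ v : F, P i (Function.update x i v) ↔
              A * (p i).eval (v + Δx i) - B * (p i).eval v = Δy i - HA + HB := by
            intro v
            simp only [hPdef, h𝓕, if_neg hin, Function.update_self]
            rw [hgA v, hgB v, hhA v, hhB v]
            constructor <;> intro hv <;> linear_combination hv
          have hfe : (Finset.univ.filter fun v : F => P i (Function.update x i v))
              = (Finset.univ.filter fun v : F =>
                  A * (p i).eval (v + Δx i) - B * (p i).eval v = Δy i - HA + HB) :=
            Finset.filter_congr (fun v _ => hcond v)
          rw [hfe]
          exact le_trans (key_count (p i) (hdeg i).1 (hdu i) A B (Δx i)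
            (Δy i - HA + HB) (hg i _) (hg i _) hΔxi) (hdeg i).2
  have hprod : ∏ i, c i =
      Fintype.card F ^ (n - (Finset.univ.filter fun i => Δx i ≠ 0).card) *
        d ^ (Finset.univ.filter fun i => Δx i ≠ 0).card := by
    simp only [hcdef]
    rw [Finset.prod_ite]
    simp only [Finset.prod_const]
    have hsplit := Finset.card_filter_add_card_filter_not
      (s := (Finset.univ : Finset (Fin n))) (p := fun i => Δx i ≠ 0)
    rw [Finset.card_univ, Fintype.card_fin] at hsplit
    rw [mul_comm]
    congr 2
    omega
  rw [hcard]
  exact le_trans hmain (le_of_eq hprod)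
end

section
/- In the setting of the GTDS differential bound (all $1 < \deg p_i \leq d$, $\delta(p_i) < q$, $p_i$ of degree $< q$), for any $\Delta\mathbf{x} \neq \mathbf{0}$ and any $\Delta\mathbf{y}$, the differential probability satisfies $\Pr_{\mathbf{x} \in \mathbb{F}_q^n}[\mathcal{F}(\mathbf{x} + \Delta\mathbf{x}) - \mathcal{F}(\mathbf{x}) = \Delta\mathbf{y}] \leq (d/q)^{\mathrm{wt}(\Delta\mathbf{x})}$. -/
/-!
Coordinate `i` of `𝓕` depends only on `x i, …, x (n-1)`, and as a function of `x i` alone it is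
`t ↦ pᵢ(t) G + H` with `G ≠ 0`. Hence the `n` differential equations form a triangular system:
once the later coordinates are fixed, the `i`-th equation in `x i` reads
`pᵢ(t + Δxᵢ) G' - pᵢ(t) G = c`. If `Δxᵢ ≠ 0` this polynomial equation is nontrivial of degree
`≤ d` (for `G' = G` because `pᵢ(t + Δxᵢ) - pᵢ(t)` is not constant), so it has at most `d`
solutions; otherwise there are at most `q` choices. Counting coordinate by coordinate gives at
most `d ^ wt(Δx) * q ^ (n - wt(Δx))` solutions.
-/

open Polynomial Finset
open scoped Classical

theorem card_filter_forall_le_prod {α : Type*} [Fintype α] :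
    ∀ {n : ℕ} (C : Fin n → (Fin n → α) → Prop) (b : Fin n → ℕ),
      (∀ i x y, (∀ j, i ≤ j → x j = y j) → C i x → C i y) →
      (∀ i x, #{t | C i (Function.update x i t)} ≤ b i) →
      #{x | ∀ i, C i x} ≤ ∏ i, b i
  | 0, _, _, _, _ => by simp
  | n + 1, C, b, hdep, hcnt => by
    rcases isEmpty_or_nonempty α with hα | ⟨⟨z⟩⟩
    · simp
    -- `C i.succ` ignores coordinate `0`, so any value `z` may be put there.
    let C' : Fin n → (Fin n → α) → Prop := fun i y => C i.succ (Fin.cons z y)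
    have hdep' : ∀ i x y, (∀ j, i ≤ j → x j = y j) → C' i x → C' i y := by
      refine fun i x y hxy => hdep i.succ _ _ fun j hj => ?_
      obtain ⟨j, rfl⟩ := Fin.exists_succ_eq.2 (Fin.ne_zero_of_lt (Fin.succ_pos i |>.trans_le hj))
      exact hxy j (Fin.succ_le_succ_iff.1 hj)
    have hcnt' : ∀ i x, #{t | C' i (Function.update x i t)} ≤ b i.succ := by
      intro i x
      simpa only [C', Fin.cons_update] using hcnt i.succ (Fin.cons z x)
    have htail : ∀ x ∈ ({x | ∀ i, C i x} : Finset (Fin (n + 1) → α)),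
        Fin.tail x ∈ ({y | ∀ i, C' i y} : Finset (Fin n → α)) := by
      simp only [mem_filter, mem_univ, true_and]
      refine fun x hx i => hdep i.succ x _ (fun j hj => ?_) (hx i.succ)
      obtain ⟨j, rfl⟩ := Fin.exists_succ_eq.2 (Fin.ne_zero_of_lt (Fin.succ_pos i |>.trans_le hj))
      rfl
    have hfiber : ∀ y ∈ ({y | ∀ i, C' i y} : Finset (Fin n → α)),
        #{x ∈ ({x | ∀ i, C i x} : Finset _) | Fin.tail x = y} ≤ b 0 := by
      intro y _
      refine (card_le_card_of_injOn (· 0)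
        (t := {t | C 0 (Function.update (Fin.cons z y) 0 t)}) ?_ ?_).trans (hcnt 0 _)
      · intro x hx
        simp only [mem_coe, mem_filter, mem_univ, true_and, Fin.update_cons_zero] at hx ⊢
        rw [← hx.2, Fin.cons_self_tail]
        exact hx.1 0
      · intro x hx x' hx' h0
        simp only [mem_coe, mem_filter, mem_univ, true_and] at hx hx'
        rw [← Fin.cons_self_tail x, ← Fin.cons_self_tail x', hx.2, hx'.2, show x 0 = x' 0 from h0]
    calc #{x | ∀ i, C i x}
        ≤ b 0 * #{y | ∀ i, C' i y} := card_le_mul_card_image_of_maps_to htail _ hfiber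
      _ ≤ b 0 * ∏ i : Fin n, b i.succ :=
          Nat.mul_le_mul_left _ (card_filter_forall_le_prod C' _ hdep' hcnt')
      _ = ∏ i, b i := (Fin.prod_univ_succ b).symm

section

variable {F : Type*} [Field F]

theorem natDegree_taylor_mul_C_sub_le (p : F[X]) (a u v c : F) :
    (taylor a p * C u - p * C v - C c).natDegree ≤ p.natDegree := by
  have h₁ : (taylor a p * C u).natDegree ≤ p.natDegree :=
    (natDegree_mul_C_le _ _).trans (natDegree_taylor p a).le
  have h₂ : (p * C v + C c).natDegree ≤ p.natDegree :=
    natDegree_add_le_of_degree_le (natDegree_mul_C_le p v)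
      ((natDegree_C c).trans_le (Nat.zero_le _))
  rw [sub_sub]
  exact (natDegree_sub_le_of_le h₁ h₂).trans_eq (max_self _)

theorem taylor_mul_C_sub_ne_zero {p : F[X]} (hp : 0 < p.natDegree) {a : F}
    (hdiff : ∀ b, ∃ x, p.eval (x + a) - p.eval x ≠ b) {u : F} (hu : u ≠ 0) (v c : F) :
    taylor a p * C u - p * C v - C c ≠ 0 := by
  intro h0
  obtain rfl | huv := eq_or_ne u v
  · obtain ⟨x, hx⟩ := hdiff (c / u)
    have := congrArg (eval x) h0
    simp only [eval_sub, eval_mul, eval_C, taylor_eval, eval_zero] at this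
    exact hx (by field_simp; linear_combination this)
  · have := congrArg (coeff · p.natDegree) h0
    simp only [coeff_sub, coeff_mul_C, coeff_taylor_natDegree, coeff_C, if_neg hp.ne',
      coeff_zero, sub_zero, coeff_natDegree, ← mul_sub] at this
    exact mul_ne_zero (leadingCoeff_ne_zero.2 (ne_zero_of_natDegree_gt hp))
      (sub_ne_zero.2 huv) this

theorem card_filter_eval_add_mul_sub_eval_mul_le [Fintype F] {p : F[X]} (hp : 0 < p.natDegree)
    {a : F} (hdiff : ∀ b, ∃ x, p.eval (x + a) - p.eval x ≠ b) {u : F} (hu : u ≠ 0) (v c : F) :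
    #{t | p.eval (t + a) * u - p.eval t * v = c} ≤ p.natDegree := by
  refine (card_le_degree_of_subset_roots fun t ht => ?_).trans
    (natDegree_taylor_mul_C_sub_le p a u v c)
  rw [mem_roots (taylor_mul_C_sub_ne_zero hp hdiff hu v c)]
  simpa [taylor_eval, sub_eq_zero] using ht

end

structure IsGTDS {F : Type*} [Semiring F] {n : ℕ} (p : Fin n → F[X])
    (g h : Fin n → (Fin n → F) → F) (𝓕 : (Fin n → F) → Fin n → F) : Prop where
  apply_eq : ∀ x i, 𝓕 x i = if (i : ℕ) + 1 = n then (p i).eval (x i)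
    else (p i).eval (x i) * g i x + h i x
  g_eq_of_forall_gt : ∀ i x y, (∀ j, i < j → x j = y j) → g i x = g i y
  h_eq_of_forall_gt : ∀ i x y, (∀ j, i < j → x j = y j) → h i x = h i y

namespace IsGTDS

section Semiring

variable {F : Type*} [Semiring F] {n : ℕ} {p : Fin n → F[X]} {g h : Fin n → (Fin n → F) → F}
  {𝓕 : (Fin n → F) → Fin n → F}

theorem apply_eq_of_forall_le (h𝓕 : IsGTDS p g h 𝓕) {i : Fin n} {x y : Fin n → F}
    (hxy : ∀ j, i ≤ j → x j = y j) : 𝓕 x i = 𝓕 y i := by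
  have hgt : ∀ j, i < j → x j = y j := fun j hj => hxy j hj.le
  simp only [h𝓕.apply_eq, hxy i le_rfl, h𝓕.g_eq_of_forall_gt i x y hgt,
    h𝓕.h_eq_of_forall_gt i x y hgt]

theorem exists_apply_update [Nontrivial F] (h𝓕 : IsGTDS p g h 𝓕) (hg : ∀ i x, g i x ≠ 0) (i : Fin n)
    (x : Fin n → F) : ∃ G ≠ 0, ∃ H, ∀ t, 𝓕 (Function.update x i t) i = (p i).eval t * G + H := by
  have hgt : ∀ t j, i < j → Function.update x i t j = x j :=
    fun t j hj => Function.update_of_ne hj.ne' t x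
  by_cases hlast : (i : ℕ) + 1 = n
  · exact ⟨1, one_ne_zero, 0, fun t => by simp [h𝓕.apply_eq, hlast]⟩
  · refine ⟨g i x, hg i x, h i x, fun t => ?_⟩
    simp only [h𝓕.apply_eq, hlast, if_false, Function.update_self,
      h𝓕.g_eq_of_forall_gt i _ _ (hgt t), h𝓕.h_eq_of_forall_gt i _ _ (hgt t)]

end Semiring

variable {F : Type*} [Field F] [Fintype F] {n : ℕ} {p : Fin n → F[X]}
  {g h : Fin n → (Fin n → F) → F} {𝓕 : (Fin n → F) → Fin n → F}

theorem card_filter_apply_update_add_sub_le (h𝓕 : IsGTDS p g h 𝓕)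
    (hg : ∀ i x, g i x ≠ 0) {i : Fin n} (hpi : 0 < (p i).natDegree) {Δx : Fin n → F}
    (hdiff : ∀ b, ∃ s, (p i).eval (s + Δx i) - (p i).eval s ≠ b) (x : Fin n → F) (c : F) :
    #{t | 𝓕 (Function.update x i t + Δx) i - 𝓕 (Function.update x i t) i = c} ≤
      (p i).natDegree := by
  obtain ⟨G, hG, H, hx⟩ := h𝓕.exists_apply_update hg i x
  obtain ⟨G', hG', H', hxΔ⟩ := h𝓕.exists_apply_update hg i (x + Δx)
  have hshift : ∀ t, Function.update x i t + Δx = Function.update (x + Δx) i (t + Δx i) := by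
    intro t
    rw [Function.update_add, Function.update_eq_self]
  convert card_filter_eval_add_mul_sub_eval_mul_le hpi hdiff hG' G (c - H' + H) using 3 with t
  rw [hshift, hx, hxΔ]
  constructor <;> intro h <;> linear_combination h

end IsGTDS

theorem gtds_differential_probability_bound_general (F : Type*) [Field F] [Fintype F]
    (n : ℕ) (d : ℕ)
    (p : Fin n → Polynomial F)
    (hdeg : ∀ i, 1 < (p i).natDegree ∧ (p i).natDegree ≤ d)
    (hdu : ∀ i, ∀ a : F, a ≠ 0 → ∀ b : F,
      Nat.card {x : F | (p i).eval (x + a) - (p i).eval x = b} < Fintype.card F)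
    (g h : Fin n → (Fin n → F) → F)
    (hg : ∀ i x, g i x ≠ 0)
    (hgdep : ∀ i x y, (∀ j, i < j → x j = y j) → g i x = g i y)
    (hhdep : ∀ i x y, (∀ j, i < j → x j = y j) → h i x = h i y)
    (𝓕 : (Fin n → F) → Fin n → F)
    (h𝓕 : ∀ x i, 𝓕 x i = if (i : ℕ) + 1 = n then (p i).eval (x i)
        else (p i).eval (x i) * g i x + h i x)
    (Δx Δy : Fin n → F) :
    (Nat.card {x : Fin n → F | ∀ i, 𝓕 (fun j => x j + Δx j) i - 𝓕 x i = Δy i} : ℝ) /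
        (Fintype.card F : ℝ) ^ n ≤
      ((d : ℝ) / (Fintype.card F : ℝ)) ^ (Finset.univ.filter fun i => Δx i ≠ 0).card := by
  have hGTDS : IsGTDS p g h 𝓕 := ⟨h𝓕, hgdep, hhdep⟩
  set q := Fintype.card F
  let b : Fin n → ℕ := fun i => if Δx i ≠ 0 then d else q
  have hdiff : ∀ i, Δx i ≠ 0 → ∀ c, ∃ s, (p i).eval (s + Δx i) - (p i).eval s ≠ c := by
    intro i hi c
    by_contra! hall
    simpa [hall, q] using hdu i (Δx i) hi c
  have hcount : Nat.card {x : Fin n → F | ∀ i, 𝓕 (x + Δx) i - 𝓕 x i = Δy i} ≤ ∏ i, b i := by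
    rw [Nat.card_eq_fintype_card, Fintype.card_subtype]
    refine card_filter_forall_le_prod _ b (fun i x y hxy hx => ?_) (fun i x => ?_)
    · rwa [hGTDS.apply_eq_of_forall_le (x := y + Δx) (y := x + Δx) fun j hj => by
        simp [hxy j hj], hGTDS.apply_eq_of_forall_le (x := y) fun j hj => (hxy j hj).symm]
    by_cases hi : Δx i = 0
    · simpa [b, hi, q] using (card_filter_le _ _).trans_eq card_univ
    · simpa [b, hi] using (hGTDS.card_filter_apply_update_add_sub_le hg
        (zero_lt_one.trans (hdeg i).1) (hdiff i hi) x (Δy i)).trans (hdeg i).2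
  have hq : (0 : ℝ) < q := by exact_mod_cast Fintype.card_pos
  calc _ ≤ (∏ i, b i : ℕ) / (q : ℝ) ^ n := by gcongr; exact_mod_cast hcount
    _ = ∏ i, ((b i : ℝ) / q) := by
        rw [prod_div_distrib, prod_const, card_univ, Fintype.card_fin, Nat.cast_prod]
    _ = _ := by
        simp only [b, Nat.cast_ite, ite_div, div_self hq.ne', ← prod_filter, prod_const]

/-- Differential count bound for a GTDS. -/
theorem gtds_differential_probability_bound (F : Type*) [Field F] [Fintype F]
    (n : ℕ) (hn : 1 ≤ n) (d : ℕ)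
    (p : Fin n → Polynomial F)
    (hp : ∀ i, Function.Bijective (fun x => (p i).eval x))
    (hdegq : ∀ i, (p i).natDegree < Fintype.card F)
    (hdeg : ∀ i, 1 < (p i).natDegree ∧ (p i).natDegree ≤ d)
    (hdu : ∀ i, ∀ a : F, a ≠ 0 → ∀ b : F,
      Nat.card {x : F | (p i).eval (x + a) - (p i).eval x = b} < Fintype.card F)
    (g h : Fin n → (Fin n → F) → F)
    (hg : ∀ i x, g i x ≠ 0)
    (hgdep : ∀ i x y, (∀ j, i < j → x j = y j) → g i x = g i y)
    (hhdep : ∀ i x y, (∀ j, i < j → x j = y j) → h i x = h i y)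
    (𝓕 : (Fin n → F) → Fin n → F)
    (h𝓕 : ∀ x i, 𝓕 x i = if (i : ℕ) + 1 = n then (p i).eval (x i)
        else (p i).eval (x i) * g i x + h i x)
    (Δx Δy : Fin n → F) (hΔx : Δx ≠ 0) :
    (Nat.card {x : Fin n → F | ∀ i, 𝓕 (fun j => x j + Δx j) i - 𝓕 x i = Δy i} : ℝ) /
        (Fintype.card F : ℝ) ^ n ≤
      ((d : ℝ) / (Fintype.card F : ℝ)) ^ (Finset.univ.filter fun i => Δx i ≠ 0).card :=
  gtds_differential_probability_bound_general F n d p hdeg hdu g h hg hgdep hhdep 𝓕 h𝓕 Δx Δy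
end
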